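/- In the expected two-block model with p > 0, every locally minimal cut respects the blocks: if {A, A^c} is a cut such that moving any single vertex to the other side does not decrease the cost, then for each i ∈ {1,2}, either V_i ⊆ A or V_i ⊆ A^c. -/

import Mathlib

/-!
Two vertices of the same block are twins: they have the same weight to every third vertex.
If a local minimum separated twins `x ∈ A` and `y ∉ A`, then adding the two inequalities
"moving `x` does not help" and "moving `y` does not help", all weights to third vertices cancel
and what remains is `2 w(x, y) ≤ 0`, contradicting `w(x, y) = p > 0`.
-/

open Finset

section LocalMinCut

variable {V : Type*} [Fintype V] [DecidableEq V]

def cutCost {M : Type*} [AddCommMonoid M] (w : V → V → M) (A : Finset V) : M :=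
  ∑ u ∈ A, ∑ v ∈ Aᶜ, w u v

def flipVertex (A : Finset V) (x : V) : Finset V :=
  if x ∈ A then A.erase x else insert x A

def IsLocalMinCut (w : V → V → ℝ) (A : Finset V) : Prop :=
  ∀ x, cutCost w A ≤ cutCost w (flipVertex A x)

def AreTwins {M : Type*} (w : V → V → M) (x y : V) : Prop :=
  ∀ v, v ≠ x → v ≠ y → w x v = w y v ∧ w v x = w v y

section CutCost

variable {M : Type*} [AddCommMonoid M] (w : V → V → M) {A : Finset V}

theorem cutCost_erase_add {x : V} (hx : x ∈ A) :
    cutCost w (A.erase x) + ∑ v ∈ Aᶜ, w x v = cutCost w A + ∑ u ∈ A.erase x, w u x := by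
  rw [cutCost, cutCost, compl_erase, ← add_sum_erase A _ hx]
  simp only [sum_insert (notMem_compl.mpr hx), sum_add_distrib]
  abel

theorem cutCost_insert_add {y : V} (hy : y ∉ A) :
    cutCost w (insert y A) + ∑ u ∈ A, w u y = cutCost w A + ∑ v ∈ Aᶜ.erase y, w y v := by
  have hsplit : ∀ u, ∑ v ∈ Aᶜ, w u v = w u y + ∑ v ∈ Aᶜ.erase y, w u v := fun u =>
    (add_sum_erase _ _ (mem_compl.mpr hy)).symm
  rw [cutCost, cutCost, compl_insert, sum_insert hy]
  simp only [hsplit, sum_add_distrib]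
  abel

end CutCost

namespace IsLocalMinCut

variable {w : V → V → ℝ} {A : Finset V}

theorem mem_of_twin (hloc : IsLocalMinCut w A) {x y : V} (htwin : AreTwins w x y)
    (hpos : 0 < w x y) (hx : x ∈ A) : y ∈ A := by
  by_contra hy
  have hmove_x := hloc x
  have hmove_y := hloc y
  rw [flipVertex, if_pos hx] at hmove_x
  rw [flipVertex, if_neg hy] at hmove_y
  have hrow : ∑ v ∈ Aᶜ, w x v = w x y + ∑ v ∈ Aᶜ.erase y, w y v := by
    rw [← add_sum_erase _ _ (mem_compl.mpr hy)]
    refine congrArg _ (sum_congr rfl fun v hv => (htwin v ?_ (ne_of_mem_erase hv)).1)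
    rintro rfl
    exact mem_compl.mp (mem_of_mem_erase hv) hx
  have hcol : ∑ u ∈ A, w u y = w x y + ∑ u ∈ A.erase x, w u x := by
    rw [← add_sum_erase _ _ hx]
    refine congrArg _ (sum_congr rfl fun u hu => (htwin u (ne_of_mem_erase hu) ?_).2.symm)
    rintro rfl
    exact hy (mem_of_mem_erase hu)
  linarith [cutCost_erase_add w hx, cutCost_insert_add w hy]

theorem subset_or_subset_compl (hloc : IsLocalMinCut w A) {B : Finset V}
    (hB : ∀ x ∈ B, ∀ y ∈ B, x ≠ y → AreTwins w x y ∧ 0 < w x y) : B ⊆ A ∨ B ⊆ Aᶜ := by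
  by_contra! h
  obtain ⟨⟨y, hyB, hyA⟩, ⟨x, hxB, hxA⟩⟩ := And.imp not_subset.mp not_subset.mp h
  rw [notMem_compl] at hxA
  have hxy : x ≠ y := fun h => hyA (h ▸ hxA)
  exact hyA (hloc.mem_of_twin (hB x hxB y hyB hxy).1 (hB x hxB y hyB hxy).2 hxA)

end IsLocalMinCut

end LocalMinCut

theorem stmt7_general {V : Type*} [Fintype V] [DecidableEq V]
    (V1 V2 : Finset V) (hdisj : Disjoint V1 V2)
    (p q : ℝ) (hp : 0 < p)
    (w : V → V → ℝ)
    (hw : ∀ u v, w u v = if u = v then 0 else if (u ∈ V1 ↔ v ∈ V1) then p else q)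
    (A : Finset V)
    (hloc : ∀ x : V,
      (∑ u ∈ A, ∑ v ∈ Aᶜ, w u v) ≤
        ∑ u ∈ (if x ∈ A then A.erase x else insert x A),
          ∑ v ∈ (if x ∈ A then A.erase x else insert x A)ᶜ, w u v) :
    (V1 ⊆ A ∨ V1 ⊆ Aᶜ) ∧ (V2 ⊆ A ∨ V2 ⊆ Aᶜ) := by
  have hblock : ∀ B : Finset V, (∀ x ∈ B, ∀ y ∈ B, (x ∈ V1 ↔ y ∈ V1)) → B ⊆ A ∨ B ⊆ Aᶜ :=
    fun B hB => IsLocalMinCut.subset_or_subset_compl hloc fun x hx y hy hxy => by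
      have hsame := hB x hx y hy
      refine ⟨fun v hvx hvy => ?_, by rw [hw, if_neg hxy, if_pos hsame]; exact hp⟩
      simp [hw, hvx, hvy, hvx.symm, hvy.symm, hsame]
  exact ⟨hblock V1 fun _ hx _ hy => iff_of_true hx hy,
    hblock V2 fun _ hx _ hy => iff_of_false (disjoint_right.mp hdisj hx) (disjoint_right.mp hdisj hy)⟩

theorem stmt7 {V : Type*} [Fintype V] [DecidableEq V]
    (V1 V2 : Finset V) (hdisj : Disjoint V1 V2) (hunion : V1 ∪ V2 = Finset.univ)
    (p q : ℝ) (hp : 0 < p) (hq : 0 ≤ q)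
    (w : V → V → ℝ)
    (hw : ∀ u v, w u v = if u = v then 0 else if (u ∈ V1 ↔ v ∈ V1) then p else q)
    (A : Finset V)
    (hloc : ∀ x : V,
      (∑ u ∈ A, ∑ v ∈ Aᶜ, w u v) ≤
        ∑ u ∈ (if x ∈ A then A.erase x else insert x A),
          ∑ v ∈ (if x ∈ A then A.erase x else insert x A)ᶜ, w u v) :
    (V1 ⊆ A ∨ V1 ⊆ Aᶜ) ∧ (V2 ⊆ A ∨ V2 ⊆ Aᶜ) :=
  stmt7_general V1 V2 hdisj p q hp w hw A hloc
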